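/- Let x ∈ ℝ, m ≥ 2 an integer, Q ≥ 1 and 0 < η < Q^{-1}/4. Suppose there exist m distinct integers q_1 < ⋯ < q_m in [Q, 2Q] and a real θ such that ‖q_i x − θ‖ < η for each i. Then there exists a positive integer n ≤ Q/(m−1) with ‖n x‖ < 2η/(m−1). -/
import Mathlib


/-- If there exist m ≥ 2 distinct integers q₁ < ⋯ < q_m in [Q, 2Q] with
‖qᵢx − θ‖ < η for each i, where 0 < η < 1/(4Q), then there is a positive
integer n ≤ Q/(m−1) with ‖nx‖ < 2η/(m−1). -/
theorem small_denominator_of_many_solutions (x θ : ℝ) (Q m : ℕ)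
    (hQ : 1 ≤ Q) (hm : 2 ≤ m) (η : ℝ) (hη0 : 0 < η) (hη : η < (Q : ℝ)⁻¹ / 4)
    (q : Fin m → ℕ) (hmono : StrictMono q)
    (hrange : ∀ i, Q ≤ q i ∧ q i ≤ 2 * Q)
    (happrox : ∀ i, ∃ p : ℤ, |(q i : ℝ) * x - θ - (p : ℝ)| < η) :
    ∃ n : ℕ, 0 < n ∧ (n : ℝ) ≤ (Q : ℝ) / ((m : ℝ) - 1) ∧
      ∃ p : ℤ, |(n : ℝ) * x - (p : ℝ)| < 2 * η / ((m : ℝ) - 1) := by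
  choose p hp using happrox
  set M := m - 1 with hMdef
  have hM1 : 1 ≤ M := by omega
  have hmM : m = M + 1 := by omega
  have hQ0 : (0:ℝ) < Q := by positivity
  have hQη : 4 * (Q:ℝ) * η < 1 := by
    have h := mul_lt_mul_of_pos_left hη (by positivity : (0:ℝ) < 4 * Q)
    have h2 : (Q:ℝ) * (Q:ℝ)⁻¹ = 1 := mul_inv_cancel₀ hQ0.ne'
    have h3 : 4 * (Q:ℝ) * ((Q:ℝ)⁻¹ / 4) = (Q:ℝ) * (Q:ℝ)⁻¹ := by ring
    linarith
  -- index embedding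
  have hIlt : ∀ j : ℕ, min j M < m := fun j => by omega
  set I : ℕ → Fin m := fun j => ⟨min j M, hIlt j⟩ with hI
  have hqle : ∀ j, q (I j) ≤ q (I M) := by
    intro j
    exact hmono.monotone (by simp [hI, Fin.mk_le_mk])
  have hqQ : ∀ j, Q ≤ q (I j) ∧ q (I j) ≤ 2 * Q := fun j => hrange (I j)
  set d : ℕ → ℕ := fun j => q (I M) - q (I j) with hd
  set r : ℕ → ℤ := fun j => p (I M) - p (I j) with hr
  have hdcast : ∀ j, (d j : ℝ) = (q (I M) : ℝ) - (q (I j) : ℝ) := by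
    intro j
    simp only [hd]
    exact_mod_cast Nat.cast_sub (hqle j)
  have hdQ : ∀ j, d j ≤ Q := by
    intro j
    have h1 := (hqQ j).1
    have h2 := (hqQ M).2
    simp only [hd]; omega
  have hdr : ∀ j, |(d j : ℝ) * x - (r j : ℝ)| < 2 * η := by
    intro j
    have h1 := hp (I M)
    have h2 := hp (I j)
    have e : (d j : ℝ) * x - (r j : ℝ)
        = ((q (I M) : ℝ) * x - θ - (p (I M) : ℝ)) - ((q (I j) : ℝ) * x - θ - (p (I j) : ℝ)) := by
      rw [hdcast j]
      simp only [hr]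
      push_cast
      ring
    rw [e]
    calc |((q (I M) : ℝ) * x - θ - (p (I M) : ℝ)) - ((q (I j) : ℝ) * x - θ - (p (I j) : ℝ))|
        ≤ |((q (I M) : ℝ) * x - θ - (p (I M) : ℝ))| + |((q (I j) : ℝ) * x - θ - (p (I j) : ℝ))| :=
          abs_sub _ _
      _ < 2 * η := by linarith
  -- all fractions r j / d j coincide
  have key : ∀ i j : ℕ, r i * (d j : ℤ) = r j * (d i : ℤ) := by
    intro i j
    have hi := hdr i
    have hj := hdr j
    have hdi : (d i : ℝ) ≤ Q := by exact_mod_cast hdQ i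
    have hdj : (d j : ℝ) ≤ Q := by exact_mod_cast hdQ j
    have hdi0 : (0:ℝ) ≤ (d i : ℝ) := by positivity
    have hdj0 : (0:ℝ) ≤ (d j : ℝ) := by positivity
    have habs : |((r i * (d j : ℤ) - r j * (d i : ℤ) : ℤ) : ℝ)| < 1 := by
      push_cast
      have e : (r i : ℝ) * (d j : ℝ) - (r j : ℝ) * (d i : ℝ)
          = (d i : ℝ) * ((d j : ℝ) * x - (r j : ℝ)) - (d j : ℝ) * ((d i : ℝ) * x - (r i : ℝ)) := by
        ring
      rw [e]
      calc |(d i : ℝ) * ((d j : ℝ) * x - (r j : ℝ)) - (d j : ℝ) * ((d i : ℝ) * x - (r i : ℝ))|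
          ≤ |(d i : ℝ) * ((d j : ℝ) * x - (r j : ℝ))| + |(d j : ℝ) * ((d i : ℝ) * x - (r i : ℝ))| :=
            abs_sub _ _
        _ = (d i : ℝ) * |(d j : ℝ) * x - (r j : ℝ)| + (d j : ℝ) * |(d i : ℝ) * x - (r i : ℝ)| := by
            rw [abs_mul, abs_mul, abs_of_nonneg hdi0, abs_of_nonneg hdj0]
        _ < 1 := by nlinarith
    have h6 : |r i * (d j : ℤ) - r j * (d i : ℤ)| < 1 := by exact_mod_cast habs
    have h7 := Int.abs_lt_one_iff.mp h6
    linarith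
  -- the reduced denominator
  have hd0pos : 0 < d 0 := by
    have : q (I 0) < q (I M) := hmono (by simp [hI, Fin.mk_lt_mk]; omega)
    simp only [hd]; omega
  set g : ℕ := Nat.gcd (d 0) (r 0).natAbs with hg
  have hgd : g ∣ d 0 := Nat.gcd_dvd_left _ _
  have hgr : (g:ℤ) ∣ r 0 := by
    rw [Int.natCast_dvd]
    exact Nat.gcd_dvd_right _ _
  have hgpos : 0 < g := Nat.gcd_pos_of_pos_left _ hd0pos
  set n : ℕ := d 0 / g with hn
  set a : ℤ := r 0 / g with ha
  have hd0eq : d 0 = n * g := (Nat.div_mul_cancel hgd).symm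
  have hr0eq : r 0 = a * g := (Int.ediv_mul_cancel hgr).symm
  have hnpos : 0 < n := Nat.div_pos (Nat.le_of_dvd hd0pos hgd) hgpos
  have hcop : IsCoprime (n : ℤ) a := by
    rw [Int.isCoprime_iff_gcd_eq_one]
    have h1 : Int.gcd ((n:ℤ) * g) (a * g) = Int.gcd (n:ℤ) a * g := by
      rw [Int.gcd_mul_right]
      simp
    have h2 : Int.gcd ((d 0 : ℤ)) (r 0) = g := by
      simp [Int.gcd, hg]
    rw [show ((n:ℤ) * (g:ℤ)) = ((d 0 : ℤ)) from by exact_mod_cast hd0eq.symm, ← hr0eq, h2] at h1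
    have h3 : Int.gcd (n:ℤ) a * g = 1 * g := by rw [one_mul]; exact h1.symm
    exact Nat.eq_of_mul_eq_mul_right hgpos h3
  have hdvd : ∀ j, n ∣ d j := by
    intro j
    have hk := key 0 j
    rw [hr0eq, show ((d 0 : ℤ)) = (n:ℤ) * g by exact_mod_cast hd0eq] at hk
    have hgz : (g:ℤ) ≠ 0 := by exact_mod_cast hgpos.ne'
    have h3 : a * (d j : ℤ) = r j * n := by
      have : a * (d j : ℤ) * g = r j * (n:ℤ) * g := by linarith [hk]
      exact mul_right_cancel₀ hgz this
    have h4 : (n:ℤ) ∣ a * (d j : ℤ) := h3 ▸ Dvd.intro_left _ rfl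
    have h5 : (n:ℤ) ∣ (d j : ℤ) := hcop.dvd_of_dvd_mul_left h4
    exact_mod_cast h5
  -- strict decrease of d
  have hdlt : ∀ i j : ℕ, i < j → j ≤ M → d j < d i := by
    intro i j hij hjM
    have : q (I i) < q (I j) := hmono (by simp [hI, Fin.mk_lt_mk]; omega)
    have h1 := hqle i
    have h2 := hqle j
    simp only [hd]
    omega
  have hdpos : ∀ j < M, 0 < d j := by
    intro j hj
    have := hdlt j M hj le_rfl
    have : d M = 0 := by simp [hd]
    omega
  -- the chain of multiples
  have hstep : ∀ j : ℕ, 1 ≤ j → j ≤ M → n * j ≤ d (M - j) := by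
    intro j
    induction j with
    | zero => omega
    | succ k ih =>
      intro _ hk
      by_cases hk0 : k = 0
      · subst hk0
        have h1 := hdvd (M - 1)
        have h2 := hdpos (M - 1) (by omega)
        have h3 := Nat.le_of_dvd h2 h1
        simpa using h3
      · have h1 := ih (by omega) (by omega)
        have hlt : d (M - k) < d (M - (k + 1)) := hdlt (M - (k+1)) (M - k) (by omega) (by omega)
        have hsub : n ∣ d (M - (k+1)) - d (M - k) := Nat.dvd_sub (hdvd _) (hdvd _)
        have hle := Nat.le_of_dvd (by omega) hsub
        have : n * (k + 1) = n * k + n := by ring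
        omega
  have hfinal : n * M ≤ d 0 := by
    have := hstep M hM1 le_rfl
    simpa using this
  have hMg : M ≤ g := by
    rw [hd0eq] at hfinal
    exact Nat.le_of_mul_le_mul_left (by linarith [hfinal]) hnpos
  -- conclude
  refine ⟨n, hnpos, ?_, a, ?_⟩
  · have hnMQ : n * M ≤ Q := hfinal.trans (hdQ 0)
    have hMr : ((m:ℝ) - 1) = (M:ℝ) := by
      rw [hmM]; push_cast; ring
    rw [hMr, le_div_iff₀ (by exact_mod_cast hM1 : (0:ℝ) < (M:ℝ))]
    exact_mod_cast hnMQ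
  · have h0 := hdr 0
    have hMr : ((m:ℝ) - 1) = (M:ℝ) := by
      rw [hmM]; push_cast; ring
    have hgR : (0:ℝ) < (g:ℝ) := by exact_mod_cast hgpos
    have hMR : (0:ℝ) < (M:ℝ) := by exact_mod_cast hM1
    have e : (d 0 : ℝ) * x - (r 0 : ℝ) = ((n:ℝ) * x - (a:ℝ)) * g := by
      rw [show ((d 0 : ℝ)) = (n:ℝ) * (g:ℝ) by exact_mod_cast hd0eq,
        show ((r 0 : ℝ)) = (a:ℝ) * (g:ℝ) by exact_mod_cast hr0eq]
      ring
    rw [e, abs_mul, abs_of_pos hgR] at h0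
    have h1 : |(n:ℝ) * x - (a:ℝ)| < 2 * η / g := by
      rw [lt_div_iff₀ hgR]; linarith
    have h2 : 2 * η / (g:ℝ) ≤ 2 * η / (M:ℝ) := by
      apply div_le_div_of_nonneg_left (by linarith) hMR
      exact_mod_cast hMg
    rw [hMr]
    linarith
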